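/- arXiv:1003.1441 — 5 statements merged into one kernel-verified Lean document; each statement's English description precedes it below -/
import Mathlib

section
/- Let (K, U) be the unique solution on (0, ∞) of the system τ²·K·U = -(1 - K²)·K' and U' = (1 - K²)²/τ⁴ with K(0⁺) = 1, U(0⁺) = 0, K(∞) = 0, U(∞) = 1. Then there exist constants C > 0 and C₁, C₂ > 0 and a radius τ₀ > 0 such that for all τ ≥ τ₀ one has 0 < K(τ) ≤ C₁·e^{-C·τ³} and |U(τ) - 1| ≤ C₂·τ^{-3}. -/
open Real Filter Set

/-- The Bogomolny system `τ² K U = -(1 - K²) K'`, `U' = (1 - K²)² / τ⁴` on `(0, ∞)`,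
with boundary conditions `K(0⁺) = 1`, `U(0⁺) = 0`, `K(∞) = 0`, `U(∞) = 1`. -/
def IsBogomolnySol (K U : ℝ → ℝ) : Prop :=
  (∀ τ ∈ Set.Ioi (0 : ℝ), DifferentiableAt ℝ K τ ∧ DifferentiableAt ℝ U τ) ∧
  (∀ τ ∈ Set.Ioi (0 : ℝ), τ ^ 2 * K τ * U τ = -(1 - (K τ) ^ 2) * deriv K τ) ∧
  (∀ τ ∈ Set.Ioi (0 : ℝ), deriv U τ = (1 - (K τ) ^ 2) ^ 2 / τ ^ 4) ∧
  Tendsto K (nhdsWithin 0 (Set.Ioi 0)) (nhds 1) ∧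
  Tendsto U (nhdsWithin 0 (Set.Ioi 0)) (nhds 0) ∧
  Tendsto K atTop (nhds 0) ∧
  Tendsto U atTop (nhds 1)

/-!
Positivity of `K`: at a zero of `K` we have `K² < 1`, so the first equation is a linear ODE
`K' = a K` with `a` continuous, and uniqueness makes `K` vanish nearby. Hence `{K > 0}` is open
and relatively closed in `(0, ∞)`, and it is nonempty because `K(0⁺) = 1`.

Decay: for large `τ` we have `K² < 1` and `U ≥ c` (any `c < 1`), so `K' ≤ -c τ² K` and
`K · exp (c τ³ / 3)` is nonincreasing. For `U`, the bounds `0 ≤ U' ≤ τ⁻⁴` make both `U` and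
`U + τ⁻³ / 3` monotone with limit `1`, which squeezes `1 - U` between `0` and `τ⁻³ / 3`.
-/

open Topology

theorem eventuallyEq_zero_of_hasDerivAt_smul {E : Type*} [NormedAddCommGroup E]
    [NormedSpace ℝ E] {f : ℝ → E} {a : ℝ → ℝ} {x₀ : ℝ} (ha : ContinuousAt a x₀)
    (hf : ∀ᶠ x in 𝓝 x₀, HasDerivAt f (a x • f x) x) (h₀ : f x₀ = 0) : f =ᶠ[𝓝 x₀] 0 := by
  have hv : ∀ᶠ x in 𝓝 x₀, LipschitzOnWith (‖a x₀‖₊ + 1) (fun y : E => a x • y) univ := by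
    filter_upwards [ha.nnnorm.eventually (gt_mem_nhds (lt_add_one ‖a x₀‖₊))] with x hx
    exact ((lipschitzWith_smul (a x)).weaken hx.le).lipschitzOnWith
  refine ODE_solution_unique_of_eventually hv (hf.mono fun x hx => ⟨hx, trivial⟩)
    (Eventually.of_forall fun x => ⟨?_, trivial⟩) h₀
  simp

theorem antitoneOn_of_hasDerivAt_nonpos {D : Set ℝ} (hD : Convex ℝ D) {f f' : ℝ → ℝ}
    (hf : ∀ x ∈ D, HasDerivAt f (f' x) x) (hf' : ∀ x ∈ D, f' x ≤ 0) : AntitoneOn f D :=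
  antitoneOn_of_hasDerivWithinAt_nonpos hD
    (fun x hx => (hf x hx).continuousAt.continuousWithinAt)
    (fun x hx => (hf x (interior_subset hx)).hasDerivWithinAt)
    (fun x hx => hf' x (interior_subset hx))

theorem monotoneOn_of_hasDerivAt_nonneg {D : Set ℝ} (hD : Convex ℝ D) {f f' : ℝ → ℝ}
    (hf : ∀ x ∈ D, HasDerivAt f (f' x) x) (hf' : ∀ x ∈ D, 0 ≤ f' x) : MonotoneOn f D :=
  monotoneOn_of_hasDerivWithinAt_nonneg hD
    (fun x hx => (hf x hx).continuousAt.continuousWithinAt)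
    (fun x hx => (hf x (interior_subset hx)).hasDerivWithinAt)
    (fun x hx => hf' x (interior_subset hx))

namespace IsBogomolnySol

variable {K U : ℝ → ℝ} {τ : ℝ}

theorem tendsto_K_nhdsGT (h : IsBogomolnySol K U) : Tendsto K (𝓝[>] 0) (𝓝 1) := h.2.2.2.1

theorem tendsto_K_atTop (h : IsBogomolnySol K U) : Tendsto K atTop (𝓝 0) := h.2.2.2.2.2.1

theorem tendsto_U_atTop (h : IsBogomolnySol K U) : Tendsto U atTop (𝓝 1) := h.2.2.2.2.2.2

theorem continuousAt_K (h : IsBogomolnySol K U) (hτ : 0 < τ) : ContinuousAt K τ :=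
  (h.1 τ hτ).1.continuousAt

theorem continuousOn_K (h : IsBogomolnySol K U) : ContinuousOn K (Ioi 0) :=
  fun _ ht => (h.continuousAt_K ht).continuousWithinAt

theorem continuousAt_U (h : IsBogomolnySol K U) (hτ : 0 < τ) : ContinuousAt U τ :=
  (h.1 τ hτ).2.continuousAt

theorem hasDerivAt_K (h : IsBogomolnySol K U) (hτ : 0 < τ) (hK : K τ ^ 2 ≠ 1) :
    HasDerivAt K (-(τ ^ 2 * U τ / (1 - K τ ^ 2)) * K τ) τ := by
  refine (h.1 τ hτ).1.hasDerivAt.congr_deriv ?_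
  have hne : 1 - K τ ^ 2 ≠ 0 := sub_ne_zero.2 (Ne.symm hK)
  field_simp
  linarith [h.2.1 τ hτ]

theorem hasDerivAt_U (h : IsBogomolnySol K U) (hτ : 0 < τ) :
    HasDerivAt U ((1 - K τ ^ 2) ^ 2 / τ ^ 4) τ :=
  h.2.2.1 τ hτ ▸ (h.1 τ hτ).2.hasDerivAt

theorem eventuallyEq_zero_of_K_eq_zero (h : IsBogomolnySol K U) (hτ : 0 < τ) (hK : K τ = 0) :
    K =ᶠ[𝓝 τ] 0 := by
  have hK' : K τ ^ 2 ≠ 1 := by simp [hK]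
  have ha : ContinuousAt (fun t => -(t ^ 2 * U t / (1 - K t ^ 2))) τ :=
    ((continuousAt_id.pow 2).mul (h.continuousAt_U hτ)).div
      (continuousAt_const.sub ((h.continuousAt_K hτ).pow 2)) (sub_ne_zero.2 hK'.symm) |>.neg
  refine eventuallyEq_zero_of_hasDerivAt_smul ha ?_ hK
  filter_upwards [Ioi_mem_nhds hτ, ((h.continuousAt_K hτ).pow 2).eventually_ne hK']
    with t ht htK using h.hasDerivAt_K ht htK

theorem eventually_K_nonpos (h : IsBogomolnySol K U) (hτ : 0 < τ) (hK : K τ ≤ 0) :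
    ∀ᶠ t in 𝓝 τ, K t ≤ 0 := by
  rcases hK.lt_or_eq with hK | hK
  · exact ((h.continuousAt_K hτ).eventually_lt continuousAt_const hK).mono fun _ => le_of_lt
  · exact (h.eventuallyEq_zero_of_K_eq_zero hτ hK).mono fun _ ht => ht.le

theorem K_pos (h : IsBogomolnySol K U) (hτ : 0 < τ) : 0 < K τ := by
  set P := Ioi (0 : ℝ) ∩ K ⁻¹' Ioi 0
  have hP : IsOpen P := h.continuousOn_K.isOpen_inter_preimage isOpen_Ioi isOpen_Ioi
  have hP₀ : (Ioi 0 ∩ P).Nonempty := by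
    obtain ⟨t, htK, ht⟩ :=
      ((h.tendsto_K_nhdsGT.eventually (lt_mem_nhds one_pos)).and self_mem_nhdsWithin).exists
    exact ⟨t, ht, ht, htK⟩
  have hclosed : closure P ∩ Ioi 0 ⊆ P := by
    rintro t ⟨htP, ht⟩
    by_contra htK
    obtain ⟨s, hsK, -, hs⟩ := mem_closure_iff_nhds.1 htP _
      (h.eventually_K_nonpos ht (not_lt.1 fun hK => htK ⟨ht, hK⟩))
    exact (show K s ≤ 0 from hsK).not_gt (show 0 < K s from hs)
  exact (isPreconnected_Ioi.subset_of_closure_inter_subset hP hP₀ hclosed hτ).2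

theorem antitoneOn_K_mul_exp (h : IsBogomolnySol K U) {c τ₁ : ℝ} (hτ₁ : 0 < τ₁) (hc : 0 ≤ c)
    (hK : ∀ t ∈ Ici τ₁, K t ^ 2 < 1) (hU : ∀ t ∈ Ici τ₁, c ≤ U t) :
    AntitoneOn (fun t => K t * exp (c * t ^ 3 / 3)) (Ici τ₁) := by
  refine antitoneOn_of_hasDerivAt_nonpos (convex_Ici τ₁)
    (f' := fun t => K t * exp (c * t ^ 3 / 3) * t ^ 2 * (c - U t / (1 - K t ^ 2)))
    (fun t ht => ?_) (fun t ht => ?_)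
  all_goals have ht₀ : 0 < t := hτ₁.trans_le ht
  all_goals have hden : 0 < 1 - K t ^ 2 := sub_pos.2 (hK t ht)
  · refine ((h.hasDerivAt_K ht₀ (hK t ht).ne).mul
      ((((hasDerivAt_pow 3 t).const_mul c).div_const 3).exp)).congr_deriv ?_
    field_simp
    ring
  · have hUK : c ≤ U t / (1 - K t ^ 2) := by
      rw [le_div_iff₀ hden]
      nlinarith [hU t ht, mul_nonneg hc (sq_nonneg (K t))]
    have := h.K_pos ht₀
    have : 0 ≤ K t * exp (c * t ^ 3 / 3) * t ^ 2 := by positivity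
    nlinarith

theorem K_le_mul_exp (h : IsBogomolnySol K U) {c τ₁ : ℝ} (hτ₁ : 0 < τ₁) (hc : 0 ≤ c)
    (hK : ∀ t ∈ Ici τ₁, K t ^ 2 < 1) (hU : ∀ t ∈ Ici τ₁, c ≤ U t) (hτ : τ₁ ≤ τ) :
    K τ ≤ K τ₁ * exp (c * τ₁ ^ 3 / 3) * exp (-(c / 3) * τ ^ 3) := calc
  K τ = K τ * exp (c * τ ^ 3 / 3) * exp (-(c / 3) * τ ^ 3) := by
    rw [mul_assoc, ← exp_add, show c * τ ^ 3 / 3 + -(c / 3) * τ ^ 3 = 0 by ring, exp_zero,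
      mul_one]
  _ ≤ K τ₁ * exp (c * τ₁ ^ 3 / 3) * exp (-(c / 3) * τ ^ 3) :=
    mul_le_mul_of_nonneg_right
      (h.antitoneOn_K_mul_exp hτ₁ hc hK hU self_mem_Ici hτ hτ) (exp_pos _).le

theorem monotoneOn_U (h : IsBogomolnySol K U) : MonotoneOn U (Ioi 0) :=
  monotoneOn_of_hasDerivAt_nonneg (convex_Ioi 0) (fun _ ht => h.hasDerivAt_U ht)
    (fun _ _ => by positivity)

theorem U_le_one (h : IsBogomolnySol K U) (hτ : 0 < τ) : U τ ≤ 1 :=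
  ge_of_tendsto h.tendsto_U_atTop
    (eventually_atTop.2 ⟨τ, fun _ ht => h.monotoneOn_U hτ (hτ.trans_le ht) ht⟩)

theorem antitoneOn_U_add_inv_pow (h : IsBogomolnySol K U) {τ₁ : ℝ} (hτ₁ : 0 < τ₁)
    (hK : ∀ t ∈ Ici τ₁, K t ^ 2 ≤ 2) :
    AntitoneOn (fun t => U t + (t ^ 3)⁻¹ / 3) (Ici τ₁) := by
  refine antitoneOn_of_hasDerivAt_nonpos (convex_Ici τ₁)
    (f' := fun t => ((1 - K t ^ 2) ^ 2 - 1) / t ^ 4) (fun t ht => ?_) (fun t ht => ?_)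
  all_goals have ht₀ : 0 < t := hτ₁.trans_le ht
  · refine ((h.hasDerivAt_U ht₀).add
      (((hasDerivAt_pow 3 t).inv (by positivity)).div_const 3)).congr_deriv ?_
    field_simp
    ring
  · have : (1 - K t ^ 2) ^ 2 ≤ 1 := by nlinarith [hK t ht, sq_nonneg (K t)]
    exact div_nonpos_of_nonpos_of_nonneg (by linarith) (by positivity)

theorem one_sub_U_le (h : IsBogomolnySol K U) {τ₁ : ℝ} (hτ₁ : 0 < τ₁)
    (hK : ∀ t ∈ Ici τ₁, K t ^ 2 ≤ 2) (hτ : τ₁ ≤ τ) : 1 - U τ ≤ (τ ^ 3)⁻¹ / 3 := by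
  have hlim : Tendsto (fun t => U t + (t ^ 3)⁻¹ / 3) atTop (𝓝 1) := by
    simpa using h.tendsto_U_atTop.add
      ((tendsto_inv_atTop_zero.comp (tendsto_pow_atTop three_ne_zero)).div_const 3)
  have := le_of_tendsto hlim (eventually_atTop.2 ⟨τ, fun t ht =>
    h.antitoneOn_U_add_inv_pow hτ₁ hK hτ (hτ.trans ht) ht⟩)
  linarith

theorem abs_U_sub_one_le (h : IsBogomolnySol K U) {τ₁ : ℝ} (hτ₁ : 0 < τ₁)
    (hK : ∀ t ∈ Ici τ₁, K t ^ 2 ≤ 2) (hτ : τ₁ ≤ τ) : |U τ - 1| ≤ (1 / 3) / τ ^ 3 := by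
  rw [abs_sub_comm, abs_of_nonneg (sub_nonneg.2 (h.U_le_one (hτ₁.trans_le hτ)))]
  linarith [h.one_sub_U_le hτ₁ hK hτ, show (τ ^ 3)⁻¹ / 3 = 1 / 3 / τ ^ 3 by ring]

end IsBogomolnySol

/-- Sharp asymptotic estimates at `τ = ∞`: there exist constants `C > 0`,
`C₁, C₂ > 0` and a radius `τ₀ > 0` such that for all `τ ≥ τ₀`,
`0 < K(τ) ≤ C₁ e^{-C τ³}` and `|U(τ) - 1| ≤ C₂ τ⁻³`. -/
theorem monopole_asymptotics_at_infinity
    (K U : ℝ → ℝ) (hsol : IsBogomolnySol K U) :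
    ∃ C C₁ C₂ τ₀ : ℝ, 0 < C ∧ 0 < C₁ ∧ 0 < C₂ ∧ 0 < τ₀ ∧
      ∀ τ : ℝ, τ₀ ≤ τ →
        (0 < K τ ∧ K τ ≤ C₁ * Real.exp (-C * τ ^ 3)) ∧
        |U τ - 1| ≤ C₂ / τ ^ 3 := by
  obtain ⟨τ₁, hτ₁⟩ := eventually_atTop.1 <| (eventually_gt_atTop 0).and <|
    ((hsol.tendsto_K_atTop.pow 2).eventually (gt_mem_nhds (by norm_num : (0 : ℝ) ^ 2 < 1))).and
      (hsol.tendsto_U_atTop.eventually (le_mem_nhds (by norm_num : (3 / 4 : ℝ) < 1)))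
  have hpos : 0 < τ₁ := (hτ₁ τ₁ le_rfl).1
  have hK : ∀ t ∈ Ici τ₁, K t ^ 2 < 1 := fun t ht => (hτ₁ t ht).2.1
  have hU : ∀ t ∈ Ici τ₁, 3 / 4 ≤ U t := fun t ht => (hτ₁ t ht).2.2
  refine ⟨3 / 4 / 3, K τ₁ * exp (3 / 4 * τ₁ ^ 3 / 3), 1 / 3, τ₁, by norm_num,
    mul_pos (hsol.K_pos hpos) (exp_pos _), by norm_num, hpos, fun τ hτ => ⟨⟨?_, ?_⟩, ?_⟩⟩
  · exact hsol.K_pos (hpos.trans_le hτ)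
  · exact hsol.K_le_mul_exp hpos (by norm_num) hK hU hτ
  · exact hsol.abs_U_sub_one_le hpos (fun t ht => (hK t ht).le.trans one_le_two) hτ
end

section
/- Suppose (K, U) is a twice differentiable solution on (0, ∞) of the system τ²·K·U = -(1 - K²)·K' and U' = (1 - K²)²/τ⁴ with 0 < K(τ) < 1 for all τ > 0. Define f(s) = K(e^s)² for s ∈ ℝ. Then f is twice differentiable and satisfies the autonomous second-order equation f''(s) - (3 + f'(s)/(f(s)·(1 - f(s))))·f'(s) + 2·f(s)·(1 - f(s)) = 0 for all s ∈ ℝ; moreover if K(τ) → 1 as τ → 0⁺ and K(τ) → 0 as τ → ∞, then f(s) → 1 as s → -∞ and f(s) → 0 as s → +∞. -/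
open Real Filter Set

/-! Differentiating the first equation and eliminating `U` and `U'` with both equations gives a
second-order equation for `K` alone. In the variable `s = ln τ` it becomes, for `k = K ∘ exp`,
`k'' = 2 k k'² / (1 - k²) + k'² / k + 3 k' - k (1 - k²)`, and substituting `f = k²`,
`f' = 2 k k'`, `f'' = 2 k'² + 2 k k''` the `k'²` terms cancel. The limits are those of `K`
composed with `exp`. -/

theorem deriv_deriv_eq_of_bogomolny {K U : ℝ → ℝ} {τ : ℝ} (hτ : τ ≠ 0)
    (hK : DifferentiableAt ℝ K τ) (hK' : DifferentiableAt ℝ (deriv K) τ)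
    (hU : DifferentiableAt ℝ U τ)
    (heq1 : ∀ᶠ t in nhds τ, t ^ 2 * K t * U t = -(1 - K t ^ 2) * deriv K t)
    (heq2 : deriv U τ = (1 - K τ ^ 2) ^ 2 / τ ^ 4)
    (hK0 : K τ ≠ 0) (hK1 : 1 - K τ ^ 2 ≠ 0) :
    deriv (deriv K) τ = 2 * K τ * deriv K τ ^ 2 / (1 - K τ ^ 2) + deriv K τ ^ 2 / K τ
      + 2 * deriv K τ / τ - K τ * (1 - K τ ^ 2) / τ ^ 2 := by
  have hlhs := ((hasDerivAt_pow 2 τ).fun_mul hK.hasDerivAt).fun_mul hU.hasDerivAt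
  have hrhs := ((hK.hasDerivAt.fun_pow 2).const_sub 1).fun_neg.fun_mul hK'.hasDerivAt
  have hderiv := hlhs.unique (hrhs.congr_of_eventuallyEq heq1)
  have hU_eq : U τ = -(1 - K τ ^ 2) * deriv K τ / (τ ^ 2 * K τ) := by
    rw [eq_div_iff (by positivity), ← heq1.self_of_nhds]; ring
  rw [heq2, hU_eq] at hderiv
  field_simp at hderiv ⊢
  linear_combination hderiv

theorem hasDerivAt_deriv_comp_exp {g : ℝ → ℝ} {s : ℝ}
    (hg : ∀ τ ∈ Ioi (0 : ℝ), DifferentiableAt ℝ g τ)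
    (hg' : DifferentiableAt ℝ (deriv g) (exp s)) :
    HasDerivAt (deriv (g ∘ exp))
      (exp s ^ 2 * deriv (deriv g) (exp s) + exp s * deriv g (exp s)) s := by
  have hderiv : deriv (g ∘ exp) = fun t => deriv g (exp t) * exp t := by
    ext t
    rw [deriv_comp t (hg _ (exp_pos t)) differentiableAt_exp, Real.deriv_exp]
  rw [hderiv]
  exact ((hg'.hasDerivAt.comp s (hasDerivAt_exp s)).fun_mul (hasDerivAt_exp s)).congr_deriv
    (by rw [Function.comp_apply]; ring)

theorem hasDerivAt_deriv_sq {k : ℝ → ℝ} {s : ℝ} (hk : ∀ t, DifferentiableAt ℝ k t)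
    (hk' : DifferentiableAt ℝ (deriv k) s) :
    HasDerivAt (deriv fun t => k t ^ 2) (2 * deriv k s ^ 2 + 2 * k s * deriv (deriv k) s) s := by
  have hderiv : deriv (fun t => k t ^ 2) = fun t => 2 * k t * deriv k t := by
    ext t
    rw [deriv_fun_pow (hk t)]; ring
  rw [hderiv]
  exact (((hk s).hasDerivAt.const_mul 2).fun_mul hk'.hasDerivAt).congr_deriv (by ring)

theorem deriv_deriv_comp_exp_eq_of_bogomolny {K U : ℝ → ℝ}
    (hdiff : ∀ τ ∈ Ioi (0 : ℝ),
      DifferentiableAt ℝ K τ ∧ DifferentiableAt ℝ (deriv K) τ ∧ DifferentiableAt ℝ U τ)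
    (heq1 : ∀ τ ∈ Ioi (0 : ℝ), τ ^ 2 * K τ * U τ = -(1 - K τ ^ 2) * deriv K τ)
    (heq2 : ∀ τ ∈ Ioi (0 : ℝ), deriv U τ = (1 - K τ ^ 2) ^ 2 / τ ^ 4)
    (hbd : ∀ τ ∈ Ioi (0 : ℝ), 0 < K τ ∧ K τ < 1) (s : ℝ) :
    deriv (deriv (K ∘ exp)) s
      = 2 * K (exp s) * deriv (K ∘ exp) s ^ 2 / (1 - K (exp s) ^ 2)
        + deriv (K ∘ exp) s ^ 2 / K (exp s) + 3 * deriv (K ∘ exp) s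
        - K (exp s) * (1 - K (exp s) ^ 2) := by
  have hτ : exp s ∈ Ioi 0 := exp_pos s
  obtain ⟨hK, hK', hU⟩ := hdiff _ hτ
  obtain ⟨hK0, hK1⟩ := hbd _ hτ
  have hK1' : 1 - K (exp s) ^ 2 ≠ 0 := by nlinarith
  rw [(hasDerivAt_deriv_comp_exp (fun τ hτ => (hdiff τ hτ).1) hK').deriv,
    deriv_comp s hK differentiableAt_exp, Real.deriv_exp,
    deriv_deriv_eq_of_bogomolny hτ.ne' hK hK' hU
      (eventually_of_mem (Ioi_mem_nhds hτ) heq1) (heq2 _ hτ) hK0.ne' hK1']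
  field_simp
  ring

/-- Under the substitution `s = ln τ`, `f(s) = K(e^s)²`, a twice differentiable
solution of the Bogomolny system `τ² K U = -(1 - K²) K'`, `U' = (1 - K²)² / τ⁴`
with `0 < K < 1` on `(0, ∞)` yields a twice differentiable `f` satisfying
`f'' - (3 + f'/(f(1-f))) f' + 2 f (1-f) = 0` on `ℝ`; moreover the boundary
conditions `K(0⁺) = 1`, `K(∞) = 0` become `f(-∞) = 1`, `f(+∞) = 0`. -/
theorem second_order_governing_equation
    (K U : ℝ → ℝ)
    (hdiff : ∀ τ ∈ Set.Ioi (0 : ℝ),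
      DifferentiableAt ℝ K τ ∧ DifferentiableAt ℝ (deriv K) τ ∧ DifferentiableAt ℝ U τ)
    (heq1 : ∀ τ ∈ Set.Ioi (0 : ℝ), τ ^ 2 * K τ * U τ = -(1 - (K τ) ^ 2) * deriv K τ)
    (heq2 : ∀ τ ∈ Set.Ioi (0 : ℝ), deriv U τ = (1 - (K τ) ^ 2) ^ 2 / τ ^ 4)
    (hbd : ∀ τ ∈ Set.Ioi (0 : ℝ), 0 < K τ ∧ K τ < 1)
    (f : ℝ → ℝ) (hf : ∀ s : ℝ, f s = (K (Real.exp s)) ^ 2) :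
    (∀ s : ℝ, DifferentiableAt ℝ f s ∧ DifferentiableAt ℝ (deriv f) s) ∧
    (∀ s : ℝ, deriv (deriv f) s
        - (3 + deriv f s / (f s * (1 - f s))) * deriv f s
        + 2 * f s * (1 - f s) = 0) ∧
    (Tendsto K (nhdsWithin 0 (Set.Ioi 0)) (nhds 1) → Tendsto f atBot (nhds 1)) ∧
    (Tendsto K atTop (nhds 0) → Tendsto f atTop (nhds 0)) := by
  obtain rfl : f = fun s => (K ∘ exp) s ^ 2 := funext hf
  have hk (s : ℝ) : DifferentiableAt ℝ (K ∘ exp) s :=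
    (hdiff _ (exp_pos s)).1.comp s differentiableAt_exp
  have hk' (s : ℝ) := hasDerivAt_deriv_comp_exp (fun τ hτ => (hdiff τ hτ).1)
    (hdiff _ (exp_pos s)).2.1
  have hf' (s : ℝ) := hasDerivAt_deriv_sq hk (hk' s).differentiableAt
  refine ⟨fun s => ⟨(hk s).pow 2, (hf' s).differentiableAt⟩, fun s => ?_,
    fun h => by simpa using (h.comp tendsto_exp_atBot_nhdsGT).pow 2,
    fun h => by simpa using (h.comp tendsto_exp_atTop).pow 2⟩
  obtain ⟨hK0, hK1⟩ := hbd _ (exp_pos s)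
  have hK1' : 1 - K (exp s) ^ 2 ≠ 0 := by nlinarith
  rw [(hf' s).deriv, deriv_fun_pow (hk s), deriv_deriv_comp_exp_eq_of_bogomolny hdiff heq1 heq2 hbd]
  simp only [Function.comp_apply]
  field_simp
  ring
end

section
/- Let Q : (-∞, -1) → (-∞, 0) be the inverse of the strictly increasing bijection G ↦ G - e^G from (-∞, 0) onto (-∞, -1), and define R : ℝ → ℝ by R(V) = -2·(1 - e^{Q(V)})² for V < -1 and R(V) = 4·(V + 1) for V ≥ -1. Then R is differentiable on all of ℝ with R'(V) > 0 for every V ∈ ℝ; in particular (1 - e^{Q(V)})² → 0 as V → -1⁻, d/dV[(1 - e^{Q(V)})²] = -2·e^{Q(V)} for V < -1, and this derivative tends to -2 as V → -1⁻. -/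
/-!
The map `G ↦ G - e^G` has derivative `1 - e^G > 0` on `(-∞, 0)`, so its inverse `Q` is monotone
with open image `(-∞, 0)`; hence `Q` is continuous, `Q V → 0` as `V → -1⁻`, and the inverse
function rule gives `Q' = 1 / (1 - e^Q)`, i.e. `((1 - e^Q)²)' = -2 e^Q`. So `R' = 4 e^Q` left of
`-1` and `R' = 4` right of it. Both `R` and `R'` have matching one-sided limits at `-1`, and a
function continuous at a point whose derivative extends continuously to it is differentiable there.
-/

open Real Filter Set Topology

section LeftInverse

variable {α β : Type*} [LinearOrder α] [LinearOrder β] {f : α → β} {g : β → α} {s : Set α}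
  {t : Set β}

theorem StrictMonoOn.monotoneOn_of_leftInvOn (hf : StrictMonoOn f s) (hg : MapsTo g t s)
    (hfg : LeftInvOn f g t) : MonotoneOn g t := by
  intro v hv w hw hvw
  by_contra! hlt
  have := hf (hg hw) (hg hv) hlt
  rw [hfg hv, hfg hw] at this
  exact hvw.not_gt this

theorem StrictMonoOn.image_eq_of_leftInvOn (hf : StrictMonoOn f s) (hfs : MapsTo f s t)
    (hg : MapsTo g t s) (hfg : LeftInvOn f g t) : g '' t = s :=
  (InvOn.bijOn ⟨hfg, hf.injOn.rightInvOn_of_leftInvOn hfg hfs hg⟩ hg hfs).image_eq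

end LeftInverse

section RealLeftInverse

variable {f g : ℝ → ℝ}

theorem StrictMonoOn.continuousOn_of_leftInvOn {s t : Set ℝ} (hf : StrictMonoOn f s)
    (hs : IsOpen s) (ht : IsOpen t) (hfs : MapsTo f s t) (hg : MapsTo g t s)
    (hfg : LeftInvOn f g t) : ContinuousOn g t := fun v hv =>
  (continuousAt_of_monotoneOn_of_image_mem_nhds (hf.monotoneOn_of_leftInvOn hg hfg)
    (ht.mem_nhds hv) (by
      rw [hf.image_eq_of_leftInvOn hfs hg hfg]
      exact hs.mem_nhds (hg hv))).continuousWithinAt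

theorem StrictMonoOn.tendsto_nhdsLT_of_leftInvOn {a b : ℝ} (hf : StrictMonoOn f (Iio a))
    (hfs : MapsTo f (Iio a) (Iio b)) (hg : MapsTo g (Iio b) (Iio a))
    (hfg : LeftInvOn f g (Iio b)) : Tendsto g (𝓝[<] b) (𝓝 a) := by
  have := (hf.monotoneOn_of_leftInvOn hg hfg).tendsto_nhdsLT
    (bddAbove_Iio.mono hg.image_subset)
  rwa [hf.image_eq_of_leftInvOn hfs hg hfg, csSup_Iio] at this

end RealLeftInverse

theorem continuousAt_ite_lt {f g : ℝ → ℝ} {a : ℝ} (hf : Tendsto f (𝓝[<] a) (𝓝 (g a)))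
    (hg : ContinuousAt g a) : ContinuousAt (fun v => if v < a then f v else g v) a := by
  have hga : (if a < a then f a else g a) = g a := if_neg (lt_irrefl a)
  refine continuousAt_iff_continuous_left'_right'.2 ⟨?_, ?_⟩
  · rw [ContinuousWithinAt, hga]
    exact hf.congr' (eventually_nhdsWithin_of_forall fun v (hv : v < a) => (if_pos hv).symm)
  · exact hg.continuousWithinAt.congr (fun v (hv : a < v) => if_neg hv.not_gt) hga

theorem hasDerivAt_ite_lt {f g f' g' : ℝ → ℝ} {a : ℝ}
    (hf : ∀ v < a, HasDerivAt f (f' v) v) (hg : ∀ v > a, HasDerivAt g (g' v) v)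
    (hfa : Tendsto f (𝓝[<] a) (𝓝 (g a))) (hga : ContinuousAt g a)
    (hf'a : Tendsto f' (𝓝[<] a) (𝓝 (g' a))) (hg'a : ContinuousAt g' a) (v : ℝ) :
    HasDerivAt (fun w => if w < a then f w else g w) (if v < a then f' v else g' v) v := by
  refine hasDerivAt_of_hasDerivAt_of_ne' (fun w hw => ?_) (continuousAt_ite_lt hfa hga)
    (continuousAt_ite_lt hf'a hg'a) v
  rcases hw.lt_or_gt with hlt | hgt
  · rw [if_pos hlt]
    exact (hf w hlt).congr_of_eventuallyEq
      (eventually_of_mem (Iio_mem_nhds hlt) fun x (hx : x < a) => if_pos hx)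
  · rw [if_neg hgt.not_gt]
    exact (hg w hgt).congr_of_eventuallyEq
      (eventually_of_mem (Ioi_mem_nhds hgt) fun x (hx : a < x) => if_neg hx.not_gt)

theorem hasDerivAt_sub_exp (G : ℝ) : HasDerivAt (fun G => G - exp G) (1 - exp G) G :=
  (hasDerivAt_id' G).sub (hasDerivAt_exp G)

theorem strictMonoOn_sub_exp : StrictMonoOn (fun G : ℝ => G - exp G) (Iio 0) := by
  refine strictMonoOn_of_deriv_pos (convex_Iio 0) (by fun_prop) fun G hG => ?_
  rw [interior_Iio] at hG
  rw [(hasDerivAt_sub_exp G).deriv, sub_pos]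
  exact exp_lt_one_iff.2 hG

theorem mapsTo_sub_exp : MapsTo (fun G : ℝ => G - exp G) (Iio 0) (Iio (-1)) := fun G hG => by
  have := add_one_lt_exp (ne_of_lt hG)
  simp only [mem_Iio]
  linarith

section SubExpInverse

variable {Q : ℝ → ℝ} (hQ : MapsTo Q (Iio (-1)) (Iio 0))
  (hQinv : LeftInvOn (fun G => G - exp G) Q (Iio (-1)))
include hQ hQinv

theorem tendsto_nhdsLT_of_leftInvOn_sub_exp : Tendsto Q (𝓝[<] (-1)) (𝓝 0) :=
  strictMonoOn_sub_exp.tendsto_nhdsLT_of_leftInvOn mapsTo_sub_exp hQ hQinv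

theorem hasDerivAt_of_leftInvOn_sub_exp {v : ℝ} (hv : v < -1) :
    HasDerivAt Q (1 - exp (Q v))⁻¹ v := by
  have hcont : ContinuousAt Q v :=
    (strictMonoOn_sub_exp.continuousOn_of_leftInvOn isOpen_Iio isOpen_Iio mapsTo_sub_exp hQ
      hQinv).continuousAt (Iio_mem_nhds hv)
  have hne : 1 - exp (Q v) ≠ 0 := (sub_pos.2 (exp_lt_one_iff.2 (hQ hv))).ne'
  exact HasDerivAt.of_local_left_inverse hcont (hasDerivAt_sub_exp _) hne
    (eventually_of_mem (Iio_mem_nhds hv) hQinv)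

theorem hasDerivAt_one_sub_exp_sq_of_leftInvOn_sub_exp {v : ℝ} (hv : v < -1) :
    HasDerivAt (fun w => (1 - exp (Q w)) ^ 2) (-2 * exp (Q v)) v := by
  have hne : 1 - exp (Q v) ≠ 0 := (sub_pos.2 (exp_lt_one_iff.2 (hQ hv))).ne'
  have hbase : HasDerivAt (fun w => 1 - exp (Q w)) (-(exp (Q v) * (1 - exp (Q v))⁻¹)) v :=
    ((hasDerivAt_exp _).comp v (hasDerivAt_of_leftInvOn_sub_exp hQ hQinv hv)).const_sub 1
  refine (hbase.fun_pow 2).congr_deriv ?_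
  field_simp
  ring

end SubExpInverse

/-- Let `Q` be the inverse of the strictly increasing bijection `G ↦ G - e^G`
from `(-∞, 0)` onto `(-∞, -1)`, and let `R(V) = -2 (1 - e^{Q(V)})²` for `V < -1`
and `R(V) = 4 (V + 1)` for `V ≥ -1`.  Then `R` is differentiable on all of `ℝ`
with `R' > 0` everywhere; in particular `(1 - e^{Q(V)})² → 0` as `V → -1⁻`,
`d/dV (1 - e^{Q(V)})² = -2 e^{Q(V)}` for `V < -1`, and this derivative tends to
`-2` as `V → -1⁻`. -/
theorem modified_nonlinearity_differentiable
    (Q R : ℝ → ℝ)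
    (hQ : ∀ v : ℝ, v < -1 → Q v < 0 ∧ Q v - Real.exp (Q v) = v)
    (hR : ∀ v : ℝ, R v = if v < -1 then -2 * (1 - Real.exp (Q v)) ^ 2 else 4 * (v + 1)) :
    Differentiable ℝ R ∧
    (∀ v : ℝ, 0 < deriv R v) ∧
    Tendsto (fun v => (1 - Real.exp (Q v)) ^ 2) (nhdsWithin (-1) (Set.Iio (-1))) (nhds 0) ∧
    (∀ v : ℝ, v < -1 →
      HasDerivAt (fun w => (1 - Real.exp (Q w)) ^ 2) (-2 * Real.exp (Q v)) v) ∧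
    Tendsto (fun v => -2 * Real.exp (Q v)) (nhdsWithin (-1) (Set.Iio (-1))) (nhds (-2)) := by
  have hQmaps : MapsTo Q (Iio (-1)) (Iio 0) := fun v hv => (hQ v hv).1
  have hQinv : LeftInvOn (fun G => G - exp G) Q (Iio (-1)) := fun v hv => (hQ v hv).2
  have hexpQ : Tendsto (fun v => exp (Q v)) (𝓝[<] (-1)) (𝓝 1) := by
    simpa [Function.comp_def] using
      (continuous_exp.tendsto 0).comp (tendsto_nhdsLT_of_leftInvOn_sub_exp hQmaps hQinv)
  have hsq : Tendsto (fun v => (1 - exp (Q v)) ^ 2) (𝓝[<] (-1)) (𝓝 0) := by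
    simpa using (hexpQ.const_sub 1).pow 2
  have hsq' := fun v (hv : v < -1) =>
    hasDerivAt_one_sub_exp_sq_of_leftInvOn_sub_exp hQmaps hQinv hv
  obtain rfl : R = fun v => if v < -1 then -2 * (1 - exp (Q v)) ^ 2 else 4 * (v + 1) := funext hR
  have hRderiv := hasDerivAt_ite_lt (f' := fun v => 4 * exp (Q v))
    (fun v hv => ((hsq' v hv).const_mul (-2)).congr_deriv (by ring))
    (fun v _ => ((hasDerivAt_id' v).add_const 1).const_mul 4) (by simpa using hsq.const_mul (-2))
    (by fun_prop) (by simpa using hexpQ.const_mul 4) continuousAt_const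
  refine ⟨fun v => (hRderiv v).differentiableAt, fun v => ?_, hsq, hsq',
    by simpa using hexpQ.const_mul (-2)⟩
  rw [(hRderiv v).deriv]
  split_ifs <;> positivity
end

section
/- Fix m < -1 and for each n ∈ ℝ let V(·; n) : [0, ∞) → ℝ be the unique solution of the initial value problem V'' + 3V' = R(V), V(0) = m, V'(0) = n. Define β⁻ = {n : there exists t > 0 with V'(t; n) < 0}, β⁰ = {n : V'(t; n) > 0 and V(t; n) ≤ -1 for all t > 0}, and β⁺ = {n : V'(t; n) > 0 for all t ≥ 0 and V(t; n) > -1 for some t > 0}. Then ℝ is the disjoint union of β⁻, β⁰ and β⁺. -/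
/-!
Let `z = V' - V - 1`. Since `R(v) ≥ 4(v + 1)`, the ODE gives `z' + 4z = R(V) - 4(V + 1) ≥ 0`,
so `e^{4t} z` is nondecreasing and `z > 0` as soon as `V'(0) ≥ 0 > V(0) + 1`. Hence at a zero
of `V'` we have `V < -1`, where `R < 0`, so `V'' = R(V) < 0` there. If `V'` never becomes
negative, such a zero would be a minimum of `V'` on `[0, ∞)` with `V'' < 0`, which is
impossible; so `V' > 0` throughout, and the three shooting sets split the line according to
whether `V` ever crosses `-1`.
-/

open Real Filter Set

lemma sq_exp_sub_one_le {x : ℝ} (hx : x ≤ 0) : (exp x - 1) ^ 2 ≤ 2 * (exp x - 1 - x) := by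
  have hder : ∀ y : ℝ, HasDerivAt (fun y => 2 * (exp y - 1 - y) - (exp y - 1) ^ 2)
      (-2 * (exp y - 1) ^ 2) y := fun y =>
    (((((hasDerivAt_exp y).sub_const 1).sub (hasDerivAt_id y)).const_mul 2).sub
        (((hasDerivAt_exp y).sub_const 1).pow 2)).congr_deriv (by ring)
  have hanti : Antitone (fun y => 2 * (exp y - 1 - y) - (exp y - 1) ^ 2) :=
    antitone_of_deriv_nonpos (fun y => (hder y).differentiableAt) fun y => by
      rw [(hder y).deriv]; exact mul_nonpos_of_nonpos_of_nonneg (by norm_num) (sq_nonneg _)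
  have := hanti hx
  simp only [exp_zero] at this
  linarith

section Nonlinearity

variable {Q R : ℝ → ℝ} (hQ : ∀ v : ℝ, v < -1 → Q v < 0 ∧ Q v - exp (Q v) = v)
  (hR : ∀ v : ℝ, R v = if v < -1 then -2 * (1 - exp (Q v)) ^ 2 else 4 * (v + 1))
include hQ hR

lemma four_mul_add_one_le (v : ℝ) : 4 * (v + 1) ≤ R v := by
  rw [hR v]
  split_ifs with hv
  · obtain ⟨hq, hqv⟩ := hQ v hv
    nlinarith [sq_exp_sub_one_le hq.le]
  · exact le_rfl

lemma neg_of_lt_neg_one {v : ℝ} (hv : v < -1) : R v < 0 := by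
  rw [hR v, if_pos hv]
  have : exp (Q v) < 1 := exp_lt_one_iff.2 (hQ v hv).1
  nlinarith

end Nonlinearity

lemma HasDerivAt.nonneg_of_forall_lt_le {f : ℝ → ℝ} {f' x : ℝ} (hf : HasDerivAt f f' x)
    (hmin : ∀ y, x < y → f x ≤ f y) : 0 ≤ f' :=
  ge_of_tendsto hf.tendsto_slope_zero_right <| eventually_nhdsWithin_of_forall fun _ ht =>
    smul_nonneg (inv_nonneg.2 (le_of_lt ht)) (sub_nonneg.2 (hmin _ (lt_add_of_pos_right x ht)))

section SecondOrderODE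

variable {F v : ℝ → ℝ}
  (hdiff : ∀ t : ℝ, 0 ≤ t → DifferentiableAt ℝ v t ∧ DifferentiableAt ℝ (deriv v) t)
  (hode : ∀ t : ℝ, 0 ≤ t → deriv (deriv v) t + 3 * deriv v t = F (v t))
include hdiff hode

lemma deriv_sub_self_sub_one_pos (hF : ∀ x, 4 * (x + 1) ≤ F x)
    (h0 : 0 < deriv v 0 - v 0 - 1) {t : ℝ} (ht : 0 ≤ t) : 0 < deriv v t - v t - 1 := by
  set g := fun s => exp (4 * s) * (deriv v s - v s - 1)
  have hg : ∀ s, 0 ≤ s → HasDerivAt g (exp (4 * s) * (F (v s) - 4 * (v s + 1))) s := by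
    intro s hs
    have hexp : HasDerivAt (fun s => exp (4 * s)) (exp (4 * s) * 4) s := by
      simpa using ((hasDerivAt_id s).const_mul 4).exp
    refine (hexp.mul (((hdiff s hs).2.hasDerivAt.sub (hdiff s hs).1.hasDerivAt).sub_const 1))
      |>.congr_deriv ?_
    simp only [Pi.sub_apply]
    linear_combination exp (4 * s) * hode s hs
  have hmono : MonotoneOn g (Ici 0) := by
    refine monotoneOn_of_hasDerivWithinAt_nonneg (convex_Ici 0)
      (fun s hs => (hg s hs).continuousAt.continuousWithinAt)
      (fun s hs => (hg s (interior_subset hs)).hasDerivWithinAt)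
      fun s _ => mul_nonneg (exp_pos _).le (sub_nonneg.2 (hF _))
  have hgt : 0 < g t := h0.trans_le (by simpa [g] using hmono self_mem_Ici ht ht)
  exact pos_of_mul_pos_right hgt (exp_pos _).le

lemma deriv_pos_of_forall_deriv_nonneg (hF : ∀ x, 4 * (x + 1) ≤ F x)
    (hFneg : ∀ x, x < -1 → F x < 0) (hv0 : v 0 < -1) (hnonneg : ∀ t > 0, 0 ≤ deriv v t)
    {t : ℝ} (ht : 0 ≤ t) : 0 < deriv v t := by
  have hnonneg' : ∀ s, 0 ≤ s → 0 ≤ deriv v s := by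
    intro s hs
    rcases hs.eq_or_lt with rfl | hs
    · exact ge_of_tendsto ((hdiff 0 le_rfl).2.continuousAt.mono_left nhdsWithin_le_nhds)
        (eventually_nhdsWithin_of_forall (s := Ioi 0) hnonneg)
    · exact hnonneg s hs
  by_contra! hle
  have hzero : deriv v t = 0 := le_antisymm hle (hnonneg' t ht)
  have hvt : v t < -1 := by
    have := deriv_sub_self_sub_one_pos hdiff hode hF (by linarith [hnonneg' 0 le_rfl]) ht
    linarith
  have hsecond : 0 ≤ deriv (deriv v) t := (hdiff t ht).2.hasDerivAt.nonneg_of_forall_lt_le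
    fun s hs => hzero ▸ hnonneg' s (ht.trans hs.le)
  linarith [hode t ht, hFneg _ hvt]

end SecondOrderODE

/-- For fixed `m < -1`, let `V(·; n)` solve `V'' + 3V' = R(V)`, `V(0) = m`,
`V'(0) = n` on `[0, ∞)`, where `R` is built from the inverse `Q` of
`G ↦ G - e^G : (-∞,0) → (-∞,-1)`.  With the shooting sets
`β⁻ = {n : ∃ t > 0, V'(t;n) < 0}`,
`β⁰ = {n : ∀ t > 0, V'(t;n) > 0 ∧ V(t;n) ≤ -1}`,
`β⁺ = {n : (∀ t ≥ 0, V'(t;n) > 0) ∧ ∃ t > 0, V(t;n) > -1}`,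
the real line is the disjoint union `ℝ = β⁻ ∪ β⁰ ∪ β⁺`. -/
theorem shooting_sets_disjoint_union
    (Q R : ℝ → ℝ)
    (hQ : ∀ v : ℝ, v < -1 → Q v < 0 ∧ Q v - Real.exp (Q v) = v)
    (hR : ∀ v : ℝ, R v = if v < -1 then -2 * (1 - Real.exp (Q v)) ^ 2 else 4 * (v + 1))
    (m : ℝ) (hm : m < -1)
    (V : ℝ → ℝ → ℝ)
    (hdiff : ∀ n : ℝ, ∀ t : ℝ, 0 ≤ t →
      DifferentiableAt ℝ (V n) t ∧ DifferentiableAt ℝ (deriv (V n)) t)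
    (hode : ∀ n : ℝ, ∀ t : ℝ, 0 ≤ t →
      deriv (deriv (V n)) t + 3 * deriv (V n) t = R (V n t))
    (hic : ∀ n : ℝ, V n 0 = m ∧ deriv (V n) 0 = n)
    (Bm B0 Bp : Set ℝ)
    (hBm : Bm = {n : ℝ | ∃ t > 0, deriv (V n) t < 0})
    (hB0 : B0 = {n : ℝ | ∀ t > 0, 0 < deriv (V n) t ∧ V n t ≤ -1})
    (hBp : Bp = {n : ℝ | (∀ t : ℝ, 0 ≤ t → 0 < deriv (V n) t) ∧ ∃ t > 0, -1 < V n t}) :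
    Bm ∪ B0 ∪ Bp = Set.univ ∧
    Disjoint Bm B0 ∧ Disjoint Bm Bp ∧ Disjoint B0 Bp := by
  subst hBm hB0 hBp
  have hpos : ∀ n, (∀ t > 0, 0 ≤ deriv (V n) t) → ∀ t, 0 ≤ t → 0 < deriv (V n) t :=
    fun n hnonneg _ ht => deriv_pos_of_forall_deriv_nonneg (hdiff n) (hode n)
      (four_mul_add_one_le hQ hR) (fun _ => neg_of_lt_neg_one hQ hR) ((hic n).1 ▸ hm) hnonneg ht
  refine ⟨eq_univ_of_forall fun n => ?_, disjoint_left.2 ?_, disjoint_left.2 ?_,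
    disjoint_left.2 ?_⟩
  · by_cases hBm : ∃ t > 0, deriv (V n) t < 0
    · exact Or.inl (Or.inl hBm)
    push Not at hBm
    by_cases hB0 : ∀ t > 0, V n t ≤ -1
    · exact Or.inl (Or.inr fun t ht => ⟨hpos n hBm t ht.le, hB0 t ht⟩)
    push Not at hB0
    exact Or.inr ⟨hpos n hBm, hB0⟩
  · rintro n ⟨t, ht, hneg⟩ hB0
    exact (hB0 t ht).1.not_gt hneg
  · rintro n ⟨t, ht, hneg⟩ hBp
    exact (hBp.1 t ht.le).not_gt hneg
  · rintro n hB0 ⟨-, t, ht, hgt⟩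
    exact (hB0 t ht).2.not_gt hgt
end

section
/- Fix m < -1 and for each n ∈ ℝ let V(·; n) : [0, ∞) → ℝ be the unique solution of V'' + 3V' = R(V), V(0) = m, V'(0) = n, and let β⁺ = {n : V'(t; n) > 0 for all t ≥ 0 and V(t; n) > -1 for some t > 0}. Then β⁺ is open and nonempty; moreover every sufficiently large n > 0 belongs to β⁺. -/
/-!
In the parametrisation `v = log a - a`, `a ∈ (0, 1]`, of `v ≤ -1` we have `R v = -2 (1 - a)²`;
since `2 log a + a² - 4 a` is increasing, `R` is increasing and `4`-Lipschitz, and `R ≥ -2`.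
Hence `e^{3t} (V' + 2/3)` is nondecreasing, so a large initial slope keeps `V' > 0` on `[0, 1]`
and lifts `V` above `-1` by time `1`. Once `V' > 0` up to a time where `V > -1`, it stays
positive: at a first zero `t₁` of `V'` we would have `V t₁ > -1`, hence `V'' t₁ > 0`. So `β⁺` is
the union over `t₀ > 0` of the sets `{n | V' > 0 on [0, t₀], V t₀ > -1}`, each of which is open
by Gronwall's continuous dependence on `n`.
-/

open Real Set

lemma monotoneOn_two_mul_log_add_sq_sub_four_mul :
    MonotoneOn (fun x : ℝ => 2 * log x + x ^ 2 - 4 * x) (Ioi 0) := by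
  refine monotoneOn_of_hasDerivWithinAt_nonneg (f' := fun x => 2 * x⁻¹ + 2 * x - 4)
    (convex_Ioi 0) (fun x hx => ?_) (fun x hx => ?_) fun x hx => ?_
  · have : x ≠ 0 := (mem_Ioi.1 hx).ne'
    fun_prop (disch := assumption)
  · rw [interior_Ioi] at hx
    have := ((hasDerivAt_log (ne_of_gt hx)).const_mul 2).fun_add (hasDerivAt_pow 2 x) |>.fun_sub
      ((hasDerivAt_id' x).const_mul 4)
    exact (this.congr_deriv (by norm_num)).hasDerivWithinAt
  · rw [interior_Ioi] at hx
    have hx : 0 < x := hx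
    have : 2 * x⁻¹ + 2 * x - 4 = 2 * (x - 1) ^ 2 / x := by field_simp; ring
    rw [this]; positivity

lemma strictMonoOn_log_sub : StrictMonoOn (fun x : ℝ => log x - x) (Ioc 0 1) := by
  refine strictMonoOn_of_hasDerivWithinAt_pos (f' := fun x => x⁻¹ - 1) (convex_Ioc 0 1)
    (fun x hx => ?_) (fun x hx => ?_) fun x hx => ?_
  · have : x ≠ 0 := hx.1.ne'
    fun_prop (disch := assumption)
  · rw [interior_Ioc] at hx
    exact ((hasDerivAt_log hx.1.ne').sub (hasDerivAt_id' x)).hasDerivWithinAt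
  · rw [interior_Ioc] at hx
    simpa using one_lt_inv₀ hx.1 |>.2 hx.2

lemma HasDerivAt.nonpos_of_forall_Ico_le {f : ℝ → ℝ} {f' a b : ℝ} (hf : HasDerivAt f f' b)
    (hab : a < b) (hle : ∀ x ∈ Ico a b, f b ≤ f x) : f' ≤ 0 := by
  have hmin : IsMinOn f (Icc a b) b := isMinOn_iff.2 fun x hx => by
    rcases hx.2.eq_or_lt with rfl | hxb
    · exact le_rfl
    · exact hle x ⟨hx.1, hxb⟩
  have hseg : segment ℝ b a ⊆ Icc a b := by
    rw [segment_symm]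
    exact segment_subset_Icc hab.le
  have := IsLocalMinOn.hasFDerivWithinAt_nonneg (IsMinOn.localize hmin)
    hf.hasFDerivAt.hasFDerivWithinAt (sub_mem_posTangentConeAt_of_segment_subset hseg)
  simp only [ContinuousLinearMap.toSpanSingleton_apply, smul_eq_mul] at this
  nlinarith

lemma isOpen_setOf_forall_pos {α β : Type*} [PseudoMetricSpace α] [TopologicalSpace β]
    {K : Set β} (hK : IsCompact K) {f : α → β → ℝ} {C : ℝ} (hcont : ∀ n, ContinuousOn (f n) K)
    (hf : ∀ n n', ∀ t ∈ K, dist (f n t) (f n' t) ≤ C * dist n n') :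
    IsOpen {n | ∀ t ∈ K, 0 < f n t} := by
  refine Metric.isOpen_iff.2 fun n hn => ?_
  rcases K.eq_empty_or_nonempty with rfl | hne
  · exact ⟨1, one_pos, fun _ _ t ht => ht.elim⟩
  obtain ⟨s, hs, hmin⟩ := hK.exists_isMinOn hne (hcont n)
  have hC : 0 < max C 1 := lt_max_of_lt_right one_pos
  refine ⟨f n s / max C 1, div_pos (hn s hs) hC, fun n' hn' t ht => ?_⟩
  have h₁ : dist n' n * max C 1 < f n s := (lt_div_iff₀ hC).1 hn'
  have h₂ : C * dist n n' ≤ max C 1 * dist n n' := by gcongr; exact le_max_left _ _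
  have h₃ := hf n n' t ht
  rw [dist_comm n n', Real.dist_eq] at *
  linarith [le_abs_self (f n t - f n' t), isMinOn_iff.1 hmin t ht]

section Nonlinearity

variable {Q R : ℝ → ℝ}

lemma exists_eq_log_sub_and_R_eq (hQ : ∀ v : ℝ, v < -1 → Q v < 0 ∧ Q v - exp (Q v) = v)
    (hR : ∀ v : ℝ, R v = if v < -1 then -2 * (1 - exp (Q v)) ^ 2 else 4 * (v + 1))
    {v : ℝ} (hv : v ≤ -1) : ∃ a ∈ Ioc (0 : ℝ) 1, v = log a - a ∧ R v = -2 * (1 - a) ^ 2 := by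
  rcases hv.lt_or_eq with hv | rfl
  · obtain ⟨hQneg, hQv⟩ := hQ v hv
    refine ⟨exp (Q v), ⟨exp_pos _, exp_le_one_iff.2 hQneg.le⟩, ?_, ?_⟩
    · rw [log_exp, hQv]
    · rw [hR, if_pos hv]
  · exact ⟨1, ⟨one_pos, le_rfl⟩, by norm_num, by rw [hR]; norm_num⟩

lemma R_sub_R_mem_Icc_of_le_neg_one (hQ : ∀ v : ℝ, v < -1 → Q v < 0 ∧ Q v - exp (Q v) = v)
    (hR : ∀ v : ℝ, R v = if v < -1 then -2 * (1 - exp (Q v)) ^ 2 else 4 * (v + 1))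
    {v w : ℝ} (hvw : v ≤ w) (hw : w ≤ -1) : R w - R v ∈ Icc 0 (4 * (w - v)) := by
  obtain ⟨a, ha, rfl, hRa⟩ := exists_eq_log_sub_and_R_eq hQ hR (hvw.trans hw)
  obtain ⟨b, hb, rfl, hRb⟩ := exists_eq_log_sub_and_R_eq hQ hR hw
  have hab : a ≤ b := strictMonoOn_log_sub.le_iff_le ha hb |>.1 hvw
  have := monotoneOn_two_mul_log_add_sq_sub_four_mul ha.1 (ha.1.trans_le hab) hab
  simp only at this
  rw [hRa, hRb]
  constructor <;> nlinarith [ha.1, hb.2]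

lemma R_sub_R_mem_Icc (hQ : ∀ v : ℝ, v < -1 → Q v < 0 ∧ Q v - exp (Q v) = v)
    (hR : ∀ v : ℝ, R v = if v < -1 then -2 * (1 - exp (Q v)) ^ 2 else 4 * (v + 1))
    {v w : ℝ} (hvw : v ≤ w) : R w - R v ∈ Icc 0 (4 * (w - v)) := by
  have linear : ∀ {v w : ℝ}, -1 ≤ v → v ≤ w → R w - R v ∈ Icc 0 (4 * (w - v)) :=
    fun {v w} hv hvw => by
      rw [hR v, hR w, if_neg hv.not_gt, if_neg (hv.trans hvw).not_gt]
      constructor <;> linarith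
  rcases le_total w (-1) with hw | hw
  · exact R_sub_R_mem_Icc_of_le_neg_one hQ hR hvw hw
  rcases le_total v (-1) with hv | hv
  · have h₁ := R_sub_R_mem_Icc_of_le_neg_one hQ hR hv le_rfl
    have h₂ := linear le_rfl hw
    constructor <;> linarith [h₁.1, h₁.2, h₂.1, h₂.2]
  · exact linear hv hvw

lemma lipschitzWith_R (hQ : ∀ v : ℝ, v < -1 → Q v < 0 ∧ Q v - exp (Q v) = v)
    (hR : ∀ v : ℝ, R v = if v < -1 then -2 * (1 - exp (Q v)) ^ 2 else 4 * (v + 1)) :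
    LipschitzWith 4 R := by
  refine LipschitzWith.of_le_add_mul 4 fun v w => ?_
  rw [Real.dist_eq, NNReal.coe_ofNat]
  rcases le_total v w with hvw | hvw
  · linarith [(R_sub_R_mem_Icc hQ hR hvw).1, abs_nonneg (v - w)]
  · linarith [(R_sub_R_mem_Icc hQ hR hvw).2, le_abs_self (v - w)]

lemma neg_two_le_R (hQ : ∀ v : ℝ, v < -1 → Q v < 0 ∧ Q v - exp (Q v) = v)
    (hR : ∀ v : ℝ, R v = if v < -1 then -2 * (1 - exp (Q v)) ^ 2 else 4 * (v + 1))
    (v : ℝ) : -2 ≤ R v := by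
  rcases le_total v (-1) with hv | hv
  · obtain ⟨a, ha, -, hRa⟩ := exists_eq_log_sub_and_R_eq hQ hR hv
    rw [hRa]
    nlinarith [ha.1, ha.2]
  · rw [hR, if_neg hv.not_gt]
    linarith

lemma R_pos (hR : ∀ v : ℝ, R v = if v < -1 then -2 * (1 - exp (Q v)) ^ 2 else 4 * (v + 1))
    {v : ℝ} (hv : -1 < v) : 0 < R v := by
  rw [hR, if_neg hv.not_gt]
  linarith

end Nonlinearity

def dampedField (R : ℝ → ℝ) (p : ℝ × ℝ) : ℝ × ℝ := (p.2, R p.1 - 3 * p.2)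

lemma lipschitzWith_dampedField {R : ℝ → ℝ} {K : NNReal} (hR : LipschitzWith K R) :
    LipschitzWith (K + 3) (dampedField R) := by
  refine LipschitzWith.of_dist_le_mul fun p q => ?_
  have hRpq := hR.dist_le_mul p.1 q.1
  simp only [dampedField, Prod.dist_eq, Real.dist_eq, NNReal.coe_add, NNReal.coe_ofNat] at *
  have h₁ := le_max_left |p.1 - q.1| |p.2 - q.2|
  have h₂ := le_max_right |p.1 - q.1| |p.2 - q.2|
  have hK := K.coe_nonneg
  refine max_le (by nlinarith [mul_le_mul_of_nonneg_left h₁ hK, abs_nonneg (p.1 - q.1)]) ?_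
  calc |R p.1 - 3 * p.2 - (R q.1 - 3 * q.2)| ≤ |R p.1 - R q.1| + |3 * (p.2 - q.2)| :=
        (abs_sub _ _).trans_eq' (by ring_nf)
    _ ≤ _ := by
        rw [abs_mul, abs_of_pos (three_pos : (0:ℝ) < 3)]
        nlinarith [mul_le_mul_of_nonneg_left h₁ hK]

/-- `(V, W) = (V, V')` solves `V'' + 3 V' = R V` on `[0, ∞)`. -/
def IsDampedSolution (R V W : ℝ → ℝ) : Prop :=
  ∀ t, 0 ≤ t → HasDerivAt V (W t) t ∧ HasDerivAt W (R (V t) - 3 * W t) t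

namespace IsDampedSolution

variable {R V W : ℝ → ℝ}

lemma continuousOn_V (h : IsDampedSolution R V W) : ContinuousOn V (Ici 0) :=
  fun t ht => (h t ht).1.continuousAt.continuousWithinAt

lemma continuousOn_W (h : IsDampedSolution R V W) : ContinuousOn W (Ici 0) :=
  fun t ht => (h t ht).2.continuousAt.continuousWithinAt

lemma dist_le {V₁ W₁ V₂ W₂ : ℝ → ℝ} {K : NNReal} (h₁ : IsDampedSolution R V₁ W₁)
    (h₂ : IsDampedSolution R V₂ W₂) (hR : LipschitzWith K R) {t : ℝ} (ht : 0 ≤ t) :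
    dist (V₁ t, W₁ t) (V₂ t, W₂ t) ≤ dist (V₁ 0, W₁ 0) (V₂ 0, W₂ 0) * exp ((K + 3) * t) := by
  have hflow : ∀ {V W}, IsDampedSolution R V W → ∀ s ∈ Ico (0 : ℝ) t,
      HasDerivWithinAt (fun s => (V s, W s)) (dampedField R (V s, W s)) (Ici s) s :=
    fun h s hs => ((h s hs.1).1.prodMk (h s hs.1).2).hasDerivWithinAt
  have hcont : ∀ {V W}, IsDampedSolution R V W → ContinuousOn (fun s => (V s, W s)) (Icc 0 t) :=
    fun h => (h.continuousOn_V.prodMk h.continuousOn_W).mono Icc_subset_Ici_self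
  simpa using dist_le_of_trajectories_ODE (fun _ => lipschitzWith_dampedField hR)
    (hcont h₁) (hflow h₁) (hcont h₂) (hflow h₂) le_rfl t ⟨ht, le_rfl⟩

lemma monotoneOn_exp_mul_W_sub (h : IsDampedSolution R V W) {c : ℝ} (hc : ∀ v, c ≤ R v) :
    MonotoneOn (fun s => exp (3 * s) * (W s - c / 3)) (Ici 0) := by
  refine monotoneOn_of_hasDerivWithinAt_nonneg (f' := fun s => exp (3 * s) * (R (V s) - c))
    (convex_Ici 0) ((continuous_exp.comp_continuousOn (by fun_prop)).mul
      (h.continuousOn_W.sub continuousOn_const)) (fun s hs => ?_) fun s _ =>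
    mul_nonneg (exp_pos _).le (sub_nonneg.2 (hc _))
  rw [interior_Ici] at hs
  have hexp : HasDerivAt (fun s => exp (3 * s)) (exp (3 * s) * 3) s := by
    simpa using ((hasDerivAt_id' s).const_mul 3).exp
  refine ((hexp.mul ((h s (le_of_lt hs)).2.sub_const (c / 3))).congr_deriv ?_).hasDerivWithinAt
  ring

lemma W_pos_of_le (h : IsDampedSolution R V W) {a t₀ : ℝ} (hRpos : ∀ v, a < v → 0 < R v)
    (ht₀ : 0 ≤ t₀) (hW : 0 < W t₀) (hV : a < V t₀) {t : ℝ} (ht : t₀ ≤ t) : 0 < W t := by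
  -- `t₁` is the first time with `W ≤ 0`; `V` increases up to it, so `W' t₁ = R (V t₁) - 3 W t₁`
  -- is positive, which is impossible after `W > 0` on `[t₀, t₁)`.
  by_contra! hWt
  have hclosed : IsClosed (Icc t₀ t ∩ W ⁻¹' Iic 0) :=
    (h.continuousOn_W.mono fun s hs => ht₀.trans hs.1).preimage_isClosed_of_isClosed
      isClosed_Icc isClosed_Iic
  obtain ⟨t₁, ⟨ht₁, hWt₁⟩, hmin⟩ := (isCompact_Icc.of_isClosed_subset hclosed
    inter_subset_left).exists_isLeast ⟨t, ⟨⟨ht, le_rfl⟩, hWt⟩⟩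
  have hpos : ∀ s ∈ Ico t₀ t₁, 0 < W s := fun s hs => not_le.1 fun hWs =>
    hs.2.not_ge (hmin ⟨⟨hs.1, hs.2.le.trans ht₁.2⟩, hWs⟩)
  have ht₀₁ : t₀ < t₁ := ht₁.1.lt_of_ne fun e => (e ▸ hW).not_ge hWt₁
  have hVt₁ : a < V t₁ := hV.trans_le <| monotoneOn_of_hasDerivWithinAt_nonneg (convex_Icc t₀ t₁)
    (h.continuousOn_V.mono fun s hs => ht₀.trans hs.1)
    (fun s hs => (h s (ht₀.trans (interior_subset hs).1)).1.hasDerivWithinAt)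
    (fun s hs => by rw [interior_Icc] at hs; exact (hpos s ⟨hs.1.le, hs.2⟩).le)
    ⟨le_rfl, ht₀₁.le⟩ ⟨ht₀₁.le, le_rfl⟩ ht₀₁.le
  have := (h t₁ (ht₀.trans ht₀₁.le)).2.nonpos_of_forall_Ico_le ht₀₁
    fun s hs => hWt₁.trans (hpos s hs).le
  linarith [hRpos _ hVt₁, show W t₁ ≤ 0 from hWt₁]

lemma shooting_iff (h : IsDampedSolution R V W) {a : ℝ} (hRpos : ∀ v, a < v → 0 < R v) :
    ((∀ t, 0 ≤ t → 0 < W t) ∧ ∃ t > 0, a < V t) ↔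
      ∃ t₀ > 0, (∀ t ∈ Icc 0 t₀, 0 < W t) ∧ a < V t₀ := by
  constructor
  · rintro ⟨hW, t₀, ht₀, hV⟩
    exact ⟨t₀, ht₀, fun t ht => hW t ht.1, hV⟩
  · rintro ⟨t₀, ht₀, hW, hV⟩
    refine ⟨fun t ht => ?_, t₀, ht₀, hV⟩
    rcases le_total t t₀ with htt₀ | htt₀
    · exact hW t ⟨ht, htt₀⟩
    · exact h.W_pos_of_le hRpos ht₀.le (hW t₀ ⟨ht₀.le, le_rfl⟩) hV htt₀

lemma W_pos_and_neg_one_lt_V (h : IsDampedSolution R V W) (hRge : ∀ v, -2 ≤ R v)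
    (hW₀ : exp 3 * (1 + |V 0|) < W 0) : (∀ t ∈ Icc 0 1, 0 < W t) ∧ -1 < V 1 := by
  have hlow : ∀ t ∈ Icc (0 : ℝ) 1, 1 / 3 + |V 0| < W t := by
    intro t ht
    have hmono := h.monotoneOn_exp_mul_W_sub hRge self_mem_Ici ht.1 ht.1
    have hexp : exp (3 * t) ≤ exp 3 := exp_le_exp.2 (by linarith [ht.2])
    simp only [mul_zero, exp_zero, one_mul] at hmono
    have hWt : 0 < W t - -2 / 3 :=
      pos_of_mul_pos_right ((by nlinarith [exp_pos 3, abs_nonneg (V 0)] : (0:ℝ) < _).trans_le hmono)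
        (exp_pos _).le
    have := hmono.trans (mul_le_mul_of_nonneg_right hexp hWt.le)
    nlinarith [exp_pos 3]
  refine ⟨fun t ht => by linarith [hlow t ht, abs_nonneg (V 0)], ?_⟩
  have hmvt := (convex_Icc (0 : ℝ) 1).mul_sub_le_image_sub_of_le_deriv
    (h.continuousOn_V.mono Icc_subset_Ici_self)
    (fun s hs => (h s (interior_subset hs).1).1.differentiableAt.differentiableWithinAt)
    (fun s hs => ((h s (interior_subset hs).1).1.deriv ▸ hlow s (interior_subset hs)).le)
    0 ⟨le_rfl, zero_le_one⟩ 1 ⟨zero_le_one, le_rfl⟩ zero_le_one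
  linarith [neg_abs_le (V 0)]

end IsDampedSolution

lemma isOpen_setOf_W_pos_and_lt {R : ℝ → ℝ} {K : NNReal} {V W : ℝ → ℝ → ℝ} {m : ℝ}
    (hsol : ∀ n, IsDampedSolution R (V n) (W n)) (hR : LipschitzWith K R)
    (hic : ∀ n, V n 0 = m ∧ W n 0 = n) {t₀ : ℝ} (ht₀ : 0 ≤ t₀) (a : ℝ) :
    IsOpen {n | (∀ t ∈ Icc 0 t₀, 0 < W n t) ∧ a < V n t₀} := by
  have hdist : ∀ n n', ∀ t ∈ Icc 0 t₀,
      dist (V n t, W n t) (V n' t, W n' t) ≤ exp ((K + 3) * t₀) * dist n n' := by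
    intro n n' t ht
    calc _ ≤ dist (V n 0, W n 0) (V n' 0, W n' 0) * exp ((K + 3) * t) :=
          (hsol n).dist_le (hsol n') hR ht.1
      _ = dist n n' * exp ((K + 3) * t) := by simp [Prod.dist_eq, hic]
      _ ≤ _ := by
          rw [mul_comm]
          gcongr
          exact ht.2
  have hW : IsOpen {n | ∀ t ∈ Icc 0 t₀, 0 < W n t} :=
    isOpen_setOf_forall_pos isCompact_Icc
      (fun n => (hsol n).continuousOn_W.mono Icc_subset_Ici_self)
      fun n n' t ht => (le_max_right _ _).trans (hdist n n' t ht)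
  have hV : IsOpen {n | ∀ t ∈ ({t₀} : Set ℝ), 0 < V n t - a} :=
    isOpen_setOf_forall_pos isCompact_singleton (fun _ => continuousOn_singleton _ _)
      fun n n' t ht => by
        obtain rfl := ht
        rw [dist_sub_right]
        exact (le_max_left _ _).trans (hdist n n' t ⟨ht₀, le_rfl⟩)
  convert hW.inter hV using 1
  ext n
  simp

theorem shooting_set_plus_open_nonempty_general
    (Q R : ℝ → ℝ)
    (hQ : ∀ v : ℝ, v < -1 → Q v < 0 ∧ Q v - Real.exp (Q v) = v)
    (hR : ∀ v : ℝ, R v = if v < -1 then -2 * (1 - Real.exp (Q v)) ^ 2 else 4 * (v + 1))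
    (m : ℝ)
    (V : ℝ → ℝ → ℝ)
    (hdiff : ∀ n : ℝ, ∀ t : ℝ, 0 ≤ t →
      DifferentiableAt ℝ (V n) t ∧ DifferentiableAt ℝ (deriv (V n)) t)
    (hode : ∀ n : ℝ, ∀ t : ℝ, 0 ≤ t →
      deriv (deriv (V n)) t + 3 * deriv (V n) t = R (V n t))
    (hic : ∀ n : ℝ, V n 0 = m ∧ deriv (V n) 0 = n)
    (Bp : Set ℝ)
    (hBp : Bp = {n : ℝ | (∀ t : ℝ, 0 ≤ t → 0 < deriv (V n) t) ∧ ∃ t > 0, -1 < V n t}) :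
    IsOpen Bp ∧ Bp.Nonempty ∧ ∃ N : ℝ, 0 < N ∧ ∀ n : ℝ, N < n → n ∈ Bp := by
  have hsol : ∀ n, IsDampedSolution R (V n) (deriv (V n)) := fun n t ht =>
    ⟨(hdiff n t ht).1.hasDerivAt, by
      rw [← hode n t ht, add_sub_cancel_right]; exact (hdiff n t ht).2.hasDerivAt⟩
  have hBp_eq : Bp = ⋃ t₀ > 0, {n | (∀ t ∈ Icc 0 t₀, 0 < deriv (V n) t) ∧ -1 < V n t₀} := by
    ext n
    simp only [hBp, mem_iUnion, exists_prop]
    exact (hsol n).shooting_iff fun _ => R_pos hR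
  have hlarge : ∀ n, exp 3 * (1 + |m|) < n → n ∈ Bp := fun n hn => by
    rw [hBp_eq, mem_iUnion₂]
    exact ⟨1, one_pos, (hsol n).W_pos_and_neg_one_lt_V (neg_two_le_R hQ hR)
      (by rwa [(hic n).1, (hic n).2])⟩
  refine ⟨?_, ⟨_, hlarge _ (lt_add_one _)⟩, _, by positivity, hlarge⟩
  rw [hBp_eq]
  exact isOpen_biUnion fun t₀ ht₀ =>
    isOpen_setOf_W_pos_and_lt hsol (lipschitzWith_R hQ hR) hic (le_of_lt ht₀) (-1)

/-- For fixed `m < -1` and the shooting family `V(·; n)` solving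
`V'' + 3V' = R(V)`, `V(0) = m`, `V'(0) = n`, the set
`β⁺ = {n : (∀ t ≥ 0, V'(t;n) > 0) ∧ ∃ t > 0, V(t;n) > -1}` is open and
nonempty; moreover every sufficiently large `n > 0` belongs to `β⁺`. -/
theorem shooting_set_plus_open_nonempty
    (Q R : ℝ → ℝ)
    (hQ : ∀ v : ℝ, v < -1 → Q v < 0 ∧ Q v - Real.exp (Q v) = v)
    (hR : ∀ v : ℝ, R v = if v < -1 then -2 * (1 - Real.exp (Q v)) ^ 2 else 4 * (v + 1))
    (m : ℝ) (hm : m < -1)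
    (V : ℝ → ℝ → ℝ)
    (hdiff : ∀ n : ℝ, ∀ t : ℝ, 0 ≤ t →
      DifferentiableAt ℝ (V n) t ∧ DifferentiableAt ℝ (deriv (V n)) t)
    (hode : ∀ n : ℝ, ∀ t : ℝ, 0 ≤ t →
      deriv (deriv (V n)) t + 3 * deriv (V n) t = R (V n t))
    (hic : ∀ n : ℝ, V n 0 = m ∧ deriv (V n) 0 = n)
    (Bp : Set ℝ)
    (hBp : Bp = {n : ℝ | (∀ t : ℝ, 0 ≤ t → 0 < deriv (V n) t) ∧ ∃ t > 0, -1 < V n t}) :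
    IsOpen Bp ∧ Bp.Nonempty ∧ ∃ N : ℝ, 0 < N ∧ ∀ n : ℝ, N < n → n ∈ Bp :=
  shooting_set_plus_open_nonempty_general Q R hQ hR m V hdiff hode hic Bp hBp
end
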